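/- For every extreme point ŷ of 𝒦 there is at most one index s ∈ D such that G_s contains a coordinate i with ŷ_i ∉ {0, 1/2, 1}. Moreover, if such an index s exists and 1/2 < ∑_{i∈G_s} ŷ_i < 1, then there is exactly one i ∈ F'_s with ŷ_i > 0. -/

import Mathlib

/-!
At a point `y` of the polytope, the directions `d` that keep every tight nonnegativity, covering
and cluster constraint tight form a subspace, and `y ± t • d` stays in the polytope for small `t`
whenever `d` is also orthogonal to `w`. So at an extreme point this subspace meets `w⊥` trivially
and has dimension at most one. A coordinate `y i ∉ {0, 1/2, 1}` in cluster `G s` always yields a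
nonzero tight direction supported in `G s` (moving mass between `i` and another positive
coordinate of `G s`, or along `i` alone when the cluster is slack); two such clusters would give
two independent directions. Likewise two positive coordinates of `F' s` in a cluster with
`1/2 < ∑ y < 1` give two independent directions.
-/

open scoped Classical
open Finset Filter Topology

theorem eq_zero_of_mem_extremePoints_of_eventually_add_smul_mem {E : Type*} [AddCommGroup E]
    [Module ℝ E] {P : Set E} {y d : E} (hy : y ∈ P.extremePoints ℝ)
    (hd : ∀ᶠ t in 𝓝 (0 : ℝ), y + t • d ∈ P) : d = 0 := by
  have hneg : ∀ᶠ t in 𝓝 (0 : ℝ), y + (-t) • d ∈ P := by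
    simpa using (continuous_neg.tendsto' 0 0 neg_zero).eventually hd
  obtain ⟨t, ⟨hplus, hminus⟩, ht⟩ :=
    (((hd.and hneg).filter_mono nhdsWithin_le_nhds).and self_mem_nhdsWithin).exists
      (f := 𝓝[>] (0 : ℝ))
  have hmid : y ∈ openSegment ℝ (y + t • d) (y + (-t) • d) :=
    ⟨1 / 2, 1 / 2, by norm_num, by norm_num, by norm_num, by module⟩
  simpa [ht.ne'] using hy.2 hplus hminus hmid

theorem eventually_add_mul_le {a b c : ℝ} (hab : a ≤ b) (hc : a = b → c = 0) :
    ∀ᶠ t in 𝓝 (0 : ℝ), a + t * c ≤ b := by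
  rcases hab.lt_or_eq with hlt | rfl
  · have hcont : Continuous fun t : ℝ => a + t * c := by fun_prop
    simpa using hcont.continuousAt.eventually (eventually_le_nhds (by simpa using hlt))
  · simp [hc rfl]

theorem eventually_le_add_mul {a b c : ℝ} (hba : b ≤ a) (hc : a = b → c = 0) :
    ∀ᶠ t in 𝓝 (0 : ℝ), b ≤ a + t * c :=
  (eventually_add_mul_le (c := -c) (neg_le_neg hba) fun h => by simp [hc (neg_inj.1 h)]).mono
    fun t ht => by linarith

theorem Finset.exists_ne_and_ne_zero_of_sum_ne {ι : Type*} {S : Finset ι} {y : ι → ℝ}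
    {i₀ : ι} (hi₀ : i₀ ∈ S) (h : ∑ i ∈ S, y i ≠ y i₀) : ∃ i ∈ S, i ≠ i₀ ∧ y i ≠ 0 := by
  by_contra! h'
  exact h (sum_eq_single_of_mem i₀ hi₀ h')

theorem sum_single_sub_single_eq_zero {ι : Type*} {S : Finset ι} {a b : ι}
    (h : a ∈ S ↔ b ∈ S) :
    ∑ i ∈ S, (Pi.single a 1 - Pi.single b 1 : ι → ℝ) i = 0 := by
  simp [sum_sub_distrib, sum_pi_single', h]

section

variable {ι D : Type*}

def knapsackPolytope [Fintype ι] (F' G : D → Finset ι) (w : ι → ℝ) (B : ℝ) : Set (ι → ℝ) :=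
  {v | (∀ i, 0 ≤ v i) ∧
    (∀ j, (1/2 : ℝ) ≤ ∑ i ∈ F' j, v i ∧ ∑ i ∈ G j, v i ≤ 1) ∧
    (∑ i, w i * v i ≤ B)}

def tightDirections (F' G : D → Finset ι) (y : ι → ℝ) : Submodule ℝ (ι → ℝ) where
  carrier := {d | (∀ i, y i = 0 → d i = 0) ∧
    (∀ j, ∑ i ∈ F' j, y i = 1/2 → ∑ i ∈ F' j, d i = 0) ∧
    (∀ j, ∑ i ∈ G j, y i = 1 → ∑ i ∈ G j, d i = 0)}
  add_mem' := by
    rintro d e ⟨hd₀, hdF, hdG⟩ ⟨he₀, heF, heG⟩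
    refine ⟨fun i hi => ?_, fun j hj => ?_, fun j hj => ?_⟩ <;>
      simp_all [sum_add_distrib]
  zero_mem' := by simp
  smul_mem' := by
    rintro c d ⟨hd₀, hdF, hdG⟩
    refine ⟨fun i hi => ?_, fun j hj => ?_, fun j hj => ?_⟩ <;>
      simp_all [← mul_sum]

variable {F' G : D → Finset ι} {y : ι → ℝ}

theorem eventually_add_smul_mem_knapsackPolytope [Fintype ι] [Finite D] {w : ι → ℝ} {B : ℝ}
    {d : ι → ℝ} (hy : y ∈ knapsackPolytope F' G w B) (hd : d ∈ tightDirections F' G y)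
    (hwd : ∑ i, w i * d i = 0) :
    ∀ᶠ t in 𝓝 (0 : ℝ), y + t • d ∈ knapsackPolytope F' G w B := by
  obtain ⟨hy₀, hyFG, hyw⟩ := hy
  obtain ⟨hd₀, hdF, hdG⟩ := hd
  have hsum : ∀ (S : Finset ι) (t : ℝ),
      ∑ i ∈ S, (y + t • d) i = ∑ i ∈ S, y i + t * ∑ i ∈ S, d i := fun S t => by
    simp [sum_add_distrib, mul_sum]
  have hw : ∀ t : ℝ, ∑ i, w i * (y + t • d) i = ∑ i, w i * y i + t * ∑ i, w i * d i :=
    fun t => by simp [mul_add, sum_add_distrib, mul_sum, mul_left_comm]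
  simp only [knapsackPolytope, Set.mem_ofPred_eq, hsum, hw, eventually_and, eventually_all]
  refine ⟨fun i => ?_, fun j => ⟨?_, ?_⟩, ?_⟩
  · simpa using eventually_le_add_mul (hy₀ i) (hd₀ i)
  · exact eventually_le_add_mul (hyFG j).1 (hdF j)
  · exact eventually_add_mul_le (hyFG j).2 (hdG j)
  · simp [hwd, hyw]

theorem eq_zero_of_mem_tightDirections [Fintype ι] [Finite D] {w : ι → ℝ} {B : ℝ}
    {d : ι → ℝ} (hy : y ∈ (knapsackPolytope F' G w B).extremePoints ℝ)
    (hd : d ∈ tightDirections F' G y) (hwd : ∑ i, w i * d i = 0) : d = 0 :=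
  eq_zero_of_mem_extremePoints_of_eventually_add_smul_mem hy
    (eventually_add_smul_mem_knapsackPolytope hy.1 hd hwd)

/-- At an extreme point the tight directions span a space of dimension at most one. -/
theorem eq_zero_of_apply_eq_zero_of_mem_tightDirections [Fintype ι] [Finite D] {w : ι → ℝ}
    {B : ℝ} {d d' : ι → ℝ} {i₀ : ι} (hy : y ∈ (knapsackPolytope F' G w B).extremePoints ℝ)
    (hd : d ∈ tightDirections F' G y) (hd' : d' ∈ tightDirections F' G y)
    (hdi₀ : d i₀ ≠ 0) (hd'i₀ : d' i₀ = 0) : d' = 0 := by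
  set c := ∑ i, w i * d i
  set c' := ∑ i, w i * d' i
  have hcomb : c' • d - c • d' = 0 := by
    refine eq_zero_of_mem_tightDirections hy
      (sub_mem (Submodule.smul_mem _ _ hd) (Submodule.smul_mem _ _ hd')) ?_
    simp only [Pi.sub_apply, Pi.smul_apply, smul_eq_mul, mul_sub, sum_sub_distrib,
      mul_left_comm _ c', mul_left_comm _ c, ← mul_sum]
    ring
  have hc' : c' = 0 := by
    simpa [hd'i₀, hdi₀] using congrFun hcomb i₀
  exact eq_zero_of_mem_tightDirections hy hd' hc'

theorem mem_iff_eq_of_mem (hdisj : ∀ j k, j ≠ k → Disjoint (G j) (G k)) {s j : D} {a : ι}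
    (ha : a ∈ G s) : a ∈ G j ↔ j = s :=
  ⟨fun h => by_contra fun hjs => disjoint_left.1 (hdisj j s hjs) h ha, fun h => h ▸ ha⟩

theorem single_mem_tightDirections (hFG : ∀ j, F' j ⊆ G j)
    (hdisj : ∀ j k, j ≠ k → Disjoint (G j) (G k)) {s : D} {a : ι} (ha : a ∈ G s)
    (hya : y a ≠ 0) (hG : ∑ i ∈ G s, y i ≠ 1) (hF : a ∈ F' s → ∑ i ∈ F' s, y i ≠ 1/2) :
    Pi.single a 1 ∈ tightDirections F' G y := by
  refine ⟨fun i hi => ?_, fun j hj => ?_, fun j hj => ?_⟩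
  · exact Pi.single_eq_of_ne (by rintro rfl; exact hya hi) 1
  · rw [sum_pi_single', if_neg]
    intro haj
    obtain rfl := (mem_iff_eq_of_mem hdisj ha).1 (hFG j haj)
    exact hF haj hj
  · rw [sum_pi_single', if_neg]
    intro haj
    obtain rfl := (mem_iff_eq_of_mem hdisj ha).1 haj
    exact hG hj

theorem single_sub_single_mem_tightDirections (hFG : ∀ j, F' j ⊆ G j)
    (hdisj : ∀ j k, j ≠ k → Disjoint (G j) (G k)) {s : D} {a b : ι} (ha : a ∈ G s)
    (hb : b ∈ G s) (hya : y a ≠ 0) (hyb : y b ≠ 0)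
    (hF : ∑ i ∈ F' s, y i = 1/2 → (a ∈ F' s ↔ b ∈ F' s)) :
    Pi.single a 1 - Pi.single b 1 ∈ tightDirections F' G y := by
  refine ⟨fun i hi => ?_, fun j hj => sum_single_sub_single_eq_zero ?_,
    fun j _ => sum_single_sub_single_eq_zero ?_⟩
  · have hia : i ≠ a := by rintro rfl; exact hya hi
    have hib : i ≠ b := by rintro rfl; exact hyb hi
    simp [hia, hib]
  · rcases eq_or_ne j s with rfl | hjs
    · exact hF hj
    · exact iff_of_false (fun h => hjs ((mem_iff_eq_of_mem hdisj ha).1 (hFG j h)))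
        (fun h => hjs ((mem_iff_eq_of_mem hdisj hb).1 (hFG j h)))
  · exact (mem_iff_eq_of_mem hdisj ha).trans (mem_iff_eq_of_mem hdisj hb).symm

theorem exists_mem_tightDirections_apply_ne_zero (hFG : ∀ j, F' j ⊆ G j)
    (hdisj : ∀ j k, j ≠ k → Disjoint (G j) (G k)) {s : D} {i₀ : ι} (hi₀ : i₀ ∈ G s)
    (hfrac : y i₀ ∉ ({0, 1/2, 1} : Set ℝ)) :
    ∃ d ∈ tightDirections F' G y, d i₀ ≠ 0 ∧ ∀ i ∉ G s, d i = 0 := by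
  simp only [Set.mem_insert_iff, Set.mem_singleton_iff, not_or] at hfrac
  obtain ⟨hy₀, hyhalf, hyone⟩ := hfrac
  have pair : ∀ S ⊆ G s, i₀ ∈ S → ∑ i ∈ S, y i ≠ y i₀ →
      (∑ i ∈ F' s, y i = 1/2 → ∀ i ∈ S, (i₀ ∈ F' s ↔ i ∈ F' s)) →
      ∃ d ∈ tightDirections F' G y, d i₀ ≠ 0 ∧ ∀ i ∉ G s, d i = 0 := by
    intro S hSG hi₀S hsum hF
    obtain ⟨i₁, hi₁, hne, hy₁⟩ := exists_ne_and_ne_zero_of_sum_ne hi₀S hsum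
    refine ⟨_, single_sub_single_mem_tightDirections hFG hdisj hi₀ (hSG hi₁) hy₀ hy₁
      fun h => hF h i₁ hi₁, by simp [hne.symm], fun i hi => ?_⟩
    simp [ne_of_mem_of_not_mem (hSG hi₁) hi, ne_of_mem_of_not_mem hi₀ hi]
  by_cases hF : ∑ i ∈ F' s, y i = 1/2 ∧ i₀ ∈ F' s
  · exact pair (F' s) (hFG s) hF.2 (hF.1 ▸ Ne.symm hyhalf) fun _ _ hi => iff_of_true hF.2 hi
  by_cases hG : ∑ i ∈ G s, y i = 1
  · by_cases hF' : ∑ i ∈ F' s, y i = 1/2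
    · have hi₀F : i₀ ∉ F' s := fun h => hF ⟨hF', h⟩
      refine pair (G s \ F' s) sdiff_subset (mem_sdiff.2 ⟨hi₀, hi₀F⟩) ?_
        fun _ _ hi => iff_of_false hi₀F (mem_sdiff.1 hi).2
      rw [sum_sdiff_eq_sub (hFG s), hG, hF']
      norm_num
      exact Ne.symm hyhalf
    · exact pair (G s) subset_rfl hi₀ (hG ▸ Ne.symm hyone) fun h => absurd h hF'
  · refine ⟨_, single_mem_tightDirections hFG hdisj hi₀ hy₀ hG fun h h' => hF ⟨h', h⟩,
      by simp, fun i hi => ?_⟩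
    exact Pi.single_eq_of_ne (ne_of_mem_of_not_mem hi₀ hi).symm 1

theorem existsUnique_pos_of_mem_extremePoints [Fintype ι] [Finite D] (hFG : ∀ j, F' j ⊆ G j)
    (hdisj : ∀ j k, j ≠ k → Disjoint (G j) (G k)) {w : ι → ℝ} {B : ℝ} {s : D}
    (hy : y ∈ (knapsackPolytope F' G w B).extremePoints ℝ)
    (hlo : 1/2 < ∑ i ∈ G s, y i) (hhi : ∑ i ∈ G s, y i < 1) :
    ∃! i, i ∈ F' s ∧ 0 < y i := by
  obtain ⟨-, hyF, -⟩ := hy.1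
  obtain ⟨i₁, hi₁, hy₁⟩ : ∃ i ∈ F' s, (0 : ℝ) < y i :=
    exists_lt_of_sum_lt (by simpa using (one_half_pos.trans_le (hyF s).1))
  refine ⟨i₁, ⟨hi₁, hy₁⟩, fun i₂ ⟨hi₂, hy₂⟩ => ?_⟩
  by_contra hne
  have hpair := single_sub_single_mem_tightDirections hFG hdisj (hFG s hi₂) (hFG s hi₁)
    hy₂.ne' hy₁.ne' fun _ => iff_of_true hi₂ hi₁
  obtain ⟨d', hd', hd'i₂, hd'ne⟩ :
      ∃ d' ∈ tightDirections F' G y, d' i₂ = 0 ∧ d' ≠ 0 := by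
    by_cases hF : ∑ i ∈ F' s, y i = 1/2
    · obtain ⟨i₃, hi₃, hy₃⟩ : ∃ i ∈ G s \ F' s, (0 : ℝ) < y i := by
        refine exists_lt_of_sum_lt (f := fun _ => 0) ?_
        rw [sum_const_zero, sum_sdiff_eq_sub (hFG s), hF]
        linarith
      obtain ⟨hi₃G, hi₃F⟩ := mem_sdiff.1 hi₃
      exact ⟨_, single_mem_tightDirections hFG hdisj hi₃G hy₃.ne' hhi.ne
        fun h => absurd h hi₃F, Pi.single_eq_of_ne (ne_of_mem_of_not_mem hi₂ hi₃F) 1, by simp⟩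
    · exact ⟨_, single_mem_tightDirections hFG hdisj (hFG s hi₁) hy₁.ne' hhi.ne fun _ => hF,
        Pi.single_eq_of_ne hne 1, by simp⟩
  exact hd'ne (eq_zero_of_apply_eq_zero_of_mem_tightDirections hy hpair hd' (by simp [hne])
    hd'i₂)

end

theorem knapsack_polytope_extreme_point_structure_general
    {ι D : Type*} [Fintype ι] [Fintype D]
    (F' G : D → Finset ι)
    (hFG : ∀ j, F' j ⊆ G j)
    (hdisj : ∀ j k, j ≠ k → Disjoint (G j) (G k))
    (w : ι → ℝ) (B : ℝ)
    (K : Set (ι → ℝ))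
    (hK : K = {v | (∀ i, 0 ≤ v i) ∧
      (∀ j, (1/2 : ℝ) ≤ ∑ i ∈ F' j, v i ∧ ∑ i ∈ G j, v i ≤ 1) ∧
      (∑ i, w i * v i ≤ B)}) :
    ∀ yhat ∈ K.extremePoints ℝ,
      (∀ s s' : D,
        (∃ i ∈ G s, yhat i ∉ ({0, 1/2, 1} : Set ℝ)) →
        (∃ i ∈ G s', yhat i ∉ ({0, 1/2, 1} : Set ℝ)) → s = s') ∧
      (∀ s : D, (∃ i ∈ G s, yhat i ∉ ({0, 1/2, 1} : Set ℝ)) →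
        (1/2 : ℝ) < ∑ i ∈ G s, yhat i → ∑ i ∈ G s, yhat i < 1 →
        ∃! i, i ∈ F' s ∧ 0 < yhat i) := by
  intro yhat hy
  subst hK
  refine ⟨fun s s' ⟨i₁, hi₁, hfrac₁⟩ ⟨i₂, hi₂, hfrac₂⟩ => ?_,
    fun s _ hlo hhi => existsUnique_pos_of_mem_extremePoints hFG hdisj hy hlo hhi⟩
  by_contra hne
  obtain ⟨d, hd, hdi₁, -⟩ := exists_mem_tightDirections_apply_ne_zero hFG hdisj hi₁ hfrac₁
  obtain ⟨d', hd', hd'i₂, hd'G⟩ := exists_mem_tightDirections_apply_ne_zero hFG hdisj hi₂ hfrac₂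
  have hd'i₁ : d' i₁ = 0 := hd'G i₁ fun h => hne ((mem_iff_eq_of_mem hdisj hi₁).1 h).symm
  exact hd'i₂ (by rw [eq_zero_of_apply_eq_zero_of_mem_tightDirections hy hd hd' hdi₁ hd'i₁]; rfl)

/-- Lemma C.1: an extreme point of the knapsack-median polytope `𝒦` has at most
one "special" cluster containing non-half-integral coordinates; and in the
strictly fractional case the special cluster has exactly one positive
coordinate in `F'_s`. -/
theorem knapsack_polytope_extreme_point_structure
    {ι D : Type*} [Fintype ι] [Fintype D]
    (F' G : D → Finset ι)
    (hFG : ∀ j, F' j ⊆ G j)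
    (hdisj : ∀ j k, j ≠ k → Disjoint (G j) (G k))
    (hcover : ∀ i : ι, ∃ j, i ∈ G j)
    (w : ι → ℝ) (B : ℝ)
    (K : Set (ι → ℝ))
    (hK : K = {v | (∀ i, 0 ≤ v i) ∧
      (∀ j, (1/2 : ℝ) ≤ ∑ i ∈ F' j, v i ∧ ∑ i ∈ G j, v i ≤ 1) ∧
      (∑ i, w i * v i ≤ B)}) :
    ∀ yhat ∈ K.extremePoints ℝ,
      (∀ s s' : D,
        (∃ i ∈ G s, yhat i ∉ ({0, 1/2, 1} : Set ℝ)) →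
        (∃ i ∈ G s', yhat i ∉ ({0, 1/2, 1} : Set ℝ)) → s = s') ∧
      (∀ s : D, (∃ i ∈ G s, yhat i ∉ ({0, 1/2, 1} : Set ℝ)) →
        (1/2 : ℝ) < ∑ i ∈ G s, yhat i → ∑ i ∈ G s, yhat i < 1 →
        ∃! i, i ∈ F' s ∧ 0 < yhat i) :=
  knapsack_polytope_extreme_point_structure_general F' G hFG hdisj w B K hK
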